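/- arXiv:2403.18278 — 2 statements merged into one kernel-verified Lean document; each statement's English description precedes it below -/
import Mathlib

section
/- Given a valid solution (C₁, C₂) to the constructed backbone instance from a 3-CNF formula, the assignment σ(xᵢ) = true iff aᵢ ∈ C₂ (and false otherwise) satisfies every clause of the formula. -/
/-- Given a valid solution (C₁, C₂) to the constructed backbone instance from
a 3-CNF formula, the assignment σ(xᵢ) = true iff aᵢ = (i, true) ∈ C₂ (and
false otherwise) satisfies every clause. -/
theorem backbone_gives_sat (l m : ℕ)
    (Y : Fin m → Finset (Fin l × Bool))
    (hcard : ∀ j, (Y j).card ≤ 3)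
    (C₁ C₂ : Set (Fin l × Bool))
    (hdisj : Disjoint C₁ C₂)
    (hC₁ : ∀ i : Fin l, (i, true) ∈ C₁ ∨ (i, false) ∈ C₁)
    (hC₂ : ∀ j, ∃ t ∈ Y j, t ∈ C₂)
    (σ : Fin l → Bool)
    (hσ : ∀ i, σ i = true ↔ (i, true) ∈ C₂) :
    ∀ j, ∃ t ∈ Y j, σ t.1 = t.2 := by
  intro j
  obtain ⟨⟨i, b⟩, hmem, hC⟩ := hC₂ j
  refine ⟨(i, b), hmem, ?_⟩
  cases b with
  | true => exact (hσ i).mpr hC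
  | false =>
    simp only
    by_contra h
    have h1 : (i, true) ∈ C₂ := (hσ i).mp (by simpa using h)
    have h2 : (i, false) ∉ C₁ := fun hx => hdisj.ne_of_mem hx hC rfl
    have h3 : (i, true) ∈ C₁ := (hC₁ i).resolve_right h2
    exact hdisj.ne_of_mem h3 h1 rfl
end

section
/- A 3-CNF formula is satisfiable if and only if the corresponding two-concept backbone instance (concept 1 with items {aᵢ, bᵢ}, concept 2 with clause tag sets) admits disjoint tag sets C₁, C₂ such that C₁ intersects every concept-1 tag set and C₂ intersects every concept-2 tag set. -/
/-- A 3-CNF formula is satisfiable iff the corresponding two-concept backbone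
instance (concept 1 with items {aᵢ, bᵢ} = {(i, true), (i, false)}, concept 2
with clause tag sets) admits disjoint tag sets C₁, C₂ such that C₁ intersects
every concept-1 tag set and C₂ intersects every concept-2 tag set. -/
theorem sat_iff_backbone (l m : ℕ)
    (Y : Fin m → Finset (Fin l × Bool))
    (hcard : ∀ j, (Y j).card ≤ 3) :
    (∃ σ : Fin l → Bool, ∀ j, ∃ t ∈ Y j, σ t.1 = t.2) ↔
    (∃ C₁ C₂ : Set (Fin l × Bool),
      Disjoint C₁ C₂ ∧
      (∀ i : Fin l, (i, true) ∈ C₁ ∨ (i, false) ∈ C₁) ∧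
      (∀ j, ∃ t ∈ Y j, t ∈ C₂)) := by
  classical
  constructor
  · rintro ⟨σ, hσ⟩
    refine ⟨{t | σ t.1 ≠ t.2}, {t | σ t.1 = t.2}, ?_, ?_, ?_⟩
    · rw [Set.disjoint_left]; intro t ht ht'; exact ht ht'
    · intro i
      cases h : σ i with
      | true => right; simp [h]
      | false => left; simp [h]
    · intro j
      obtain ⟨t, ht, h⟩ := hσ j
      exact ⟨t, ht, h⟩
  · rintro ⟨C₁, C₂, hdisj, hcov, hclause⟩
    refine ⟨fun i => decide ((i, true) ∈ C₂), fun j => ?_⟩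
    obtain ⟨t, ht, htC⟩ := hclause j
    refine ⟨t, ht, ?_⟩
    cases h : t.2 with
    | true => simp [← h, htC]
    | false =>
      have h1 : (t.1, true) ∈ C₁ := by
        rcases hcov t.1 with h' | h'
        · exact h'
        · exact absurd htC (Set.disjoint_left.mp hdisj (by rwa [← h, Prod.mk.eta] at h'))
      have : (t.1, true) ∉ C₂ := Set.disjoint_left.mp hdisj h1
      simp [this]
end
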